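/- arXiv:2101.00287 — 2 statements merged into one kernel-verified Lean document; each statement's English description precedes it below -/
import Mathlib

section
/- Let D and L be star bodies in R^n with L arbitrary, let 0 < k < n, and let g be a non-negative continuous function on L with g(0) = ||g||_∞ = 1. Then (∫_L ||x||_D^{-k} g(x) dx / ∫_D ||x||_D^{-k} dx)^{1/(n-k)} ≤ (∫_L g(x) dx / |D|)^{1/n}. (This is the key lemma of Milman–Pajor used in the proof of the main theorem.) -/
/-! Since `0 ≤ g ≤ 1`, the measure `g dx` on `L` is dominated by Lebesgue measure and has total
mass `∫_L g`. By the layer-cake formula, `∫_L ‖x‖_D^{-k} g` is then at most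
`∫_0^∞ min (∫_L g, |{‖x‖_D^{-k} > t}|) dt`, and homogeneity of the gauge gives
`|{‖x‖_D^{-k} > t}| = t^{-n/k} |D|`. Cutting at `t₀ = (∫_L g / |D|)^{-k/n}` yields
`∫_L ‖x‖_D^{-k} g ≤ n/(n-k) · |D| · (∫_L g / |D|)^{(n-k)/n}`, while the same computation for
`g = 1_D` is an equality: `∫_D ‖x‖_D^{-k} = n/(n-k) · |D|`. -/

open MeasureTheory Metric Set
open scoped Pointwise

noncomputable section

/-- Euclidean space ℝⁿ. -/
abbrev En (n : ℕ) := EuclideanSpace ℝ (Fin n)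

/-- A star body: compact, origin interior, star-shaped about the origin, with
continuous Minkowski functional (the `gauge`). -/
def IsStarBody {n : ℕ} (K : Set (En n)) : Prop :=
  IsCompact K ∧ K ∈ nhds (0 : En n) ∧
    (∀ x ∈ K, ∀ t : ℝ, t ∈ Icc (0:ℝ) 1 → t • x ∈ K) ∧ Continuous (gauge K)

open Filter Module
open scoped Topology ENNReal

section Gauge

variable {E : Type*} [AddCommGroup E] [Module ℝ E] {K : Set E}

theorem setOf_gauge_lt_one_subset (hK : StarConvex ℝ 0 K) (hK₀ : Absorbent ℝ K) :
    {x | gauge K x < 1} ⊆ K := fun x hx =>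
  by_contra fun hxK => (one_le_gauge_of_notMem hK (hK₀ x) hxK).not_gt hx

theorem setOf_gauge_lt_eq_smul (K : Set E) {s : ℝ} (hs : 0 < s) :
    {x | gauge K x < s} = s • {x | gauge K x < 1} := by
  ext x
  rw [mem_smul_set_iff_inv_smul_mem₀ hs.ne']
  simp only [mem_ofPred_eq, gauge_smul_of_nonneg (inv_nonneg.2 hs.le), smul_eq_mul,
    inv_mul_lt_iff₀ hs, mul_one]

/-- The zero set of the gauge is removed because `0 ^ (-p) = 0` for `Real.rpow`. -/
theorem setOf_lt_gauge_rpow_neg (K : Set E) {p t : ℝ} (hp : 0 < p) (ht : 0 < t) :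
    {x | t < gauge K x ^ (-p)} = {x | gauge K x < t ^ (-p⁻¹)} \ {x | gauge K x = 0} := by
  ext x
  simp only [mem_ofPred_eq, Set.mem_sdiff]
  rcases (gauge_nonneg x : 0 ≤ gauge K x).eq_or_lt with h | h
  · simp [← h, Real.zero_rpow (neg_ne_zero.2 hp.ne'), ht.le]
  · rw [← inv_neg, Real.lt_rpow_inv_iff_of_neg h ht (neg_neg_of_pos hp)]
    simp [h.ne']

theorem setOf_lt_gauge_rpow_neg_subset (hK : StarConvex ℝ 0 K) (hK₀ : Absorbent ℝ K) {p t : ℝ}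
    (hp : 0 < p) (ht : 1 ≤ t) : {x | t < gauge K x ^ (-p)} ⊆ K := by
  rw [setOf_lt_gauge_rpow_neg K hp (one_pos.trans_le ht)]
  exact fun x hx => setOf_gauge_lt_one_subset hK hK₀ <| hx.1.trans_le <|
    Real.rpow_le_one_of_one_le_of_nonpos ht (neg_nonpos.2 (inv_nonneg.2 hp.le))

end Gauge

theorem ENNReal.le_ofReal_pow_mul_of_forall_gt {m m' : ℝ≥0∞} {s₀ : ℝ} {d : ℕ}
    (hm' : ENNReal.ofReal (s₀ ^ d) ≠ 0 ∨ m' ≠ ∞)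
    (h : ∀ s > s₀, m ≤ ENNReal.ofReal (s ^ d) * m') : m ≤ ENNReal.ofReal (s₀ ^ d) * m' := by
  have hcont : Tendsto (fun s : ℝ => ENNReal.ofReal (s ^ d)) (𝓝[>] s₀)
      (𝓝 (ENNReal.ofReal (s₀ ^ d))) :=
    ((ENNReal.continuous_ofReal.comp (continuous_pow d)).tendsto s₀).mono_left nhdsWithin_le_nhds
  exact ge_of_tendsto (ENNReal.Tendsto.mul_const hcont hm')
    (eventually_nhdsWithin_of_forall h)

section AddHaar

variable {E : Type*} [NormedAddCommGroup E] [NormedSpace ℝ E] [MeasurableSpace E] [BorelSpace E]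
  [FiniteDimensional ℝ E] (μ : Measure E) [μ.IsAddHaarMeasure] {K : Set E}

theorem addHaar_setOf_gauge_lt_one (hK : StarConvex ℝ 0 K) (hK₀ : K ∈ 𝓝 0) :
    μ {x | gauge K x < 1} = μ K := by
  refine le_antisymm (measure_mono (setOf_gauge_lt_one_subset hK (absorbent_nhds_zero hK₀))) ?_
  simpa using ENNReal.le_ofReal_pow_mul_of_forall_gt (s₀ := 1) (d := finrank ℝ E) (by simp)
    fun s (hs : 1 < s) => by
      rw [← Measure.addHaar_smul_of_nonneg μ (by positivity),
        ← setOf_gauge_lt_eq_smul K (by linarith)]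
      exact measure_mono fun x hx => (gauge_le_one_of_mem hx).trans_lt hs

theorem addHaar_setOf_gauge_lt (hK : StarConvex ℝ 0 K) (hK₀ : K ∈ 𝓝 0) {s : ℝ} (hs : 0 < s) :
    μ {x | gauge K x < s} = ENNReal.ofReal (s ^ finrank ℝ E) * μ K := by
  rw [setOf_gauge_lt_eq_smul K hs, Measure.addHaar_smul_of_nonneg μ hs.le,
    addHaar_setOf_gauge_lt_one μ hK hK₀]

theorem addHaar_setOf_gauge_eq_zero (hK : StarConvex ℝ 0 K) (hK₀ : K ∈ 𝓝 0) (hKfin : μ K ≠ ∞)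
    (hd : 0 < finrank ℝ E) : μ {x | gauge K x = 0} = 0 := by
  have h := ENNReal.le_ofReal_pow_mul_of_forall_gt (s₀ := 0) (Or.inr hKfin) fun s (hs : 0 < s) => by
    rw [← addHaar_setOf_gauge_lt μ hK hK₀ hs]
    exact measure_mono fun x (hx : gauge K x = 0) => show gauge K x < s by rw [hx]; exact hs
  rwa [zero_pow hd.ne', ENNReal.ofReal_zero, zero_mul, nonpos_iff_eq_zero] at h

theorem addHaar_setOf_lt_gauge_rpow_neg (hK : StarConvex ℝ 0 K) (hK₀ : K ∈ 𝓝 0) (hKfin : μ K ≠ ∞)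
    {p t : ℝ} (hp : 0 < p) (hd : 0 < finrank ℝ E) (ht : 0 < t) :
    μ {x | t < gauge K x ^ (-p)} = ENNReal.ofReal (t ^ (-(finrank ℝ E / p))) * μ K := by
  rw [setOf_lt_gauge_rpow_neg K hp ht,
    measure_sdiff_null (addHaar_setOf_gauge_eq_zero μ hK hK₀ hKfin hd),
    addHaar_setOf_gauge_lt μ hK hK₀ (Real.rpow_pos_of_pos ht _), ← Real.rpow_natCast,
    ← Real.rpow_mul ht.le, neg_mul, inv_mul_eq_div]

theorem addHaar_setOf_lt_gauge_rpow_neg_inter_self (hK : StarConvex ℝ 0 K) (hK₀ : K ∈ 𝓝 0)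
    (hKfin : μ K ≠ ∞) {p t : ℝ} (hp : 0 < p) (hd : 0 < finrank ℝ E) (ht : 0 < t) (ht1 : t ≤ 1) :
    μ ({x | t < gauge K x ^ (-p)} ∩ K) = μ K := by
  have hsub : {x | gauge K x < 1} ⊆ K := setOf_gauge_lt_one_subset hK (absorbent_nhds_zero hK₀)
  have h1 : 1 ≤ t ^ (-p⁻¹) :=
    Real.one_le_rpow_of_pos_of_le_one_of_nonpos ht ht1 (neg_nonpos.2 (inv_nonneg.2 hp.le))
  refine le_antisymm (measure_mono inter_subset_right) ?_
  calc μ K = μ ({x | gauge K x < 1} \ {x | gauge K x = 0}) := by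
        rw [measure_sdiff_null (addHaar_setOf_gauge_eq_zero μ hK hK₀ hKfin hd),
          addHaar_setOf_gauge_lt_one μ hK hK₀]
    _ ≤ μ ({x | t < gauge K x ^ (-p)} ∩ K) := by
        rw [setOf_lt_gauge_rpow_neg K hp ht]
        exact measure_mono fun x hx => ⟨⟨hx.1.trans_le h1, hx.2⟩, hsub hx.1⟩

end AddHaar

theorem lintegral_Ioi_rpow_neg_div {d p c : ℝ} (hp : 0 < p) (hpd : p < d) (hc : 0 < c) :
    ∫⁻ t in Ioi c, ENNReal.ofReal (t ^ (-(d / p)))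
      = ENNReal.ofReal (c ^ (1 - d / p) * (p / (d - p))) := by
  have ha : -(d / p) < -1 := by rw [neg_lt_neg_iff, one_lt_div hp]; exact hpd
  rw [← ofReal_integral_eq_lintegral_ofReal (integrableOn_Ioi_rpow_of_lt ha hc)
    (ae_restrict_of_forall_mem measurableSet_Ioi fun t ht => Real.rpow_nonneg (hc.trans ht).le _),
    integral_Ioi_rpow_of_lt ha hc]
  have hdp : d - p ≠ 0 := (sub_pos.2 hpd).ne'
  rw [show -(d / p) + 1 = 1 - d / p by ring, show 1 - d / p = -((d - p) / p) by field_simp; ring]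
  field_simp

section LayerCake

variable {α : Type*} [MeasurableSpace α] {μ ν : Measure α} {f : α → ℝ}

theorem lintegral_ofReal_le_of_le_measure (hνμ : ν ≤ μ) (hf : AEMeasurable f ν)
    (hf0 : 0 ≤ᵐ[ν] f) {t₀ : ℝ} (ht₀ : 0 ≤ t₀) :
    ∫⁻ x, ENNReal.ofReal (f x) ∂ν
      ≤ ν univ * ENNReal.ofReal t₀ + ∫⁻ t in Ioi t₀, μ {x | t < f x} := by
  rw [lintegral_eq_lintegral_meas_lt ν hf0 hf, ← Ioc_union_Ioi_eq_Ioi ht₀,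
    lintegral_union measurableSet_Ioi (Ioc_disjoint_Ioi le_rfl)]
  gcongr
  · calc ∫⁻ t in Ioc 0 t₀, ν {x | t < f x} ≤ ∫⁻ _ in Ioc 0 t₀, ν univ :=
          lintegral_mono fun t => measure_mono (subset_univ _)
      _ = ν univ * ENNReal.ofReal t₀ := by rw [setLIntegral_const, Real.volume_Ioc, sub_zero]

theorem lintegral_ofReal_mul_le {L : Set α} (hL : MeasurableSet L) (hf : Measurable f)
    (hf0 : 0 ≤ f) {g : α → ℝ} (hg : AEMeasurable g (μ.restrict L)) (hg1 : ∀ x ∈ L, g x ≤ 1)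
    {t₀ : ℝ} (ht₀ : 0 ≤ t₀) :
    ∫⁻ x in L, ENNReal.ofReal (f x * g x) ∂μ
      ≤ (∫⁻ x in L, ENNReal.ofReal (g x) ∂μ) * ENNReal.ofReal t₀
        + ∫⁻ t in Ioi t₀, μ {x | t < f x} := by
  set ν := (μ.restrict L).withDensity fun x => ENNReal.ofReal (g x)
  have hνμ : ν ≤ μ := calc
    ν ≤ (μ.restrict L).withDensity 1 := withDensity_mono <|
        ae_restrict_of_forall_mem hL fun x hx => by simpa using hg1 x hx
    _ ≤ μ := by rw [withDensity_one]; exact Measure.restrict_le_self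
  have hν : ∫⁻ x in L, ENNReal.ofReal (f x * g x) ∂μ = ∫⁻ x, ENNReal.ofReal (f x) ∂ν := by
    rw [lintegral_withDensity_eq_lintegral_mul₀ hg.ennreal_ofReal hf.ennreal_ofReal.aemeasurable]
    refine setLIntegral_congr_fun hL fun x hx => ?_
    rw [Pi.mul_apply, ENNReal.ofReal_mul (hf0 x), mul_comm]
  have hν_univ : ν univ = ∫⁻ x in L, ENNReal.ofReal (g x) ∂μ := by
    rw [withDensity_apply _ MeasurableSet.univ, Measure.restrict_univ]
  rw [hν, ← hν_univ]
  exact lintegral_ofReal_le_of_le_measure hνμ hf.aemeasurable (ae_of_all _ hf0) ht₀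

end LayerCake

section GaugeIntegrals

variable {E : Type*} [NormedAddCommGroup E] [NormedSpace ℝ E] [MeasurableSpace E] [BorelSpace E]
  [FiniteDimensional ℝ E] (μ : Measure E) [μ.IsAddHaarMeasure] {K : Set E} {p : ℝ}

theorem lintegral_gauge_rpow_neg (hK : StarConvex ℝ 0 K) (hK₀ : K ∈ 𝓝 0) (hKfin : μ K ≠ ∞)
    (hKm : Measurable (gauge K)) (hp : 0 < p) (hpd : p < finrank ℝ E) :
    ∫⁻ x in K, ENNReal.ofReal (gauge K x ^ (-p)) ∂μ
      = ENNReal.ofReal (finrank ℝ E / (finrank ℝ E - p)) * μ K := by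
  have hd : 0 < finrank ℝ E := by exact_mod_cast hp.trans hpd
  have hfm : Measurable fun x => gauge K x ^ (-p) := hKm.pow_const _
  have hdist (t : ℝ) :
      μ.restrict K {x | t < gauge K x ^ (-p)} = μ ({x | t < gauge K x ^ (-p)} ∩ K) :=
    Measure.restrict_apply (measurableSet_lt measurable_const hfm)
  have hsmall : ∀ t ∈ Ioc (0 : ℝ) 1, μ.restrict K {x | t < gauge K x ^ (-p)} = μ K :=
    fun t ht => by
    rw [hdist, addHaar_setOf_lt_gauge_rpow_neg_inter_self μ hK hK₀ hKfin hp hd ht.1 ht.2]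
  have hlarge : ∀ t ∈ Ioi (1 : ℝ), μ.restrict K {x | t < gauge K x ^ (-p)}
      = ENNReal.ofReal (t ^ (-(finrank ℝ E / p))) * μ K := fun t ht => by
    rw [hdist,
      inter_eq_left.2 (setOf_lt_gauge_rpow_neg_subset hK (absorbent_nhds_zero hK₀) hp ht.le),
      addHaar_setOf_lt_gauge_rpow_neg μ hK hK₀ hKfin hp hd (one_pos.trans ht)]
  have hcoef : ENNReal.ofReal (finrank ℝ E / (finrank ℝ E - p))
      = 1 + ENNReal.ofReal (p / (finrank ℝ E - p)) := by
    have hdp : (finrank ℝ E : ℝ) - p ≠ 0 := (sub_pos.2 hpd).ne'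
    rw [← ENNReal.ofReal_one,
      ← ENNReal.ofReal_add zero_le_one (div_nonneg hp.le (sub_pos.2 hpd).le)]
    congr 1
    field_simp
    ring
  rw [lintegral_eq_lintegral_meas_lt _ (ae_of_all _ fun x => Real.rpow_nonneg (gauge_nonneg x) _)
      hfm.aemeasurable, ← Ioc_union_Ioi_eq_Ioi zero_le_one,
    lintegral_union measurableSet_Ioi (Ioc_disjoint_Ioi le_rfl),
    setLIntegral_congr_fun measurableSet_Ioc hsmall,
    setLIntegral_congr_fun measurableSet_Ioi hlarge, setLIntegral_const,
    lintegral_mul_const' _ _ hKfin, lintegral_Ioi_rpow_neg_div hp hpd one_pos, Real.volume_Ioc,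
    sub_zero, ENNReal.ofReal_one, Real.one_rpow, one_mul, hcoef]
  ring

theorem setIntegral_gauge_rpow_neg (hK : StarConvex ℝ 0 K) (hK₀ : K ∈ 𝓝 0) (hKfin : μ K ≠ ∞)
    (hKm : Measurable (gauge K)) (hp : 0 < p) (hpd : p < finrank ℝ E) :
    ∫ x in K, gauge K x ^ (-p) ∂μ = finrank ℝ E / (finrank ℝ E - p) * μ.real K := by
  rw [integral_eq_lintegral_of_nonneg_ae (ae_of_all _ fun x => Real.rpow_nonneg (gauge_nonneg x) _)
      (hKm.pow_const _).aestronglyMeasurable, lintegral_gauge_rpow_neg μ hK hK₀ hKfin hKm hp hpd,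
    ENNReal.toReal_mul, ENNReal.toReal_ofReal (div_nonneg (Nat.cast_nonneg _) (sub_pos.2 hpd).le),
    measureReal_def]

theorem setIntegral_gauge_rpow_neg_mul_le (hK : StarConvex ℝ 0 K) (hK₀ : K ∈ 𝓝 0)
    (hKfin : μ K ≠ ∞) (hKm : Measurable (gauge K)) (hp : 0 < p) (hpd : p < finrank ℝ E)
    {L : Set E} (hL : MeasurableSet L) {g : E → ℝ} (hg : IntegrableOn g L μ)
    (hg0 : ∀ x ∈ L, 0 ≤ g x) (hg1 : ∀ x ∈ L, g x ≤ 1) {t : ℝ} (ht : 0 < t) :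
    ∫ x in L, gauge K x ^ (-p) * g x ∂μ
      ≤ (∫ x in L, g x ∂μ) * t
        + μ.real K * (t ^ (1 - finrank ℝ E / p) * (p / (finrank ℝ E - p))) := by
  have hd : 0 < finrank ℝ E := by exact_mod_cast hp.trans hpd
  have hfm : Measurable fun x => gauge K x ^ (-p) := hKm.pow_const _
  have hf0 : 0 ≤ fun x => gauge K x ^ (-p) := fun x => Real.rpow_nonneg (gauge_nonneg x) _
  have hC : 0 ≤ ∫ x in L, g x ∂μ := setIntegral_nonneg hL hg0
  have htail : 0 ≤ t ^ (1 - finrank ℝ E / p) * (p / (finrank ℝ E - p)) :=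
    mul_nonneg (Real.rpow_nonneg ht.le _) (div_nonneg hp.le (sub_pos.2 hpd).le)
  have hbound := lintegral_ofReal_mul_le hL hfm hf0 hg.aemeasurable hg1 ht.le
  rw [← ofReal_integral_eq_lintegral_ofReal hg (ae_restrict_of_forall_mem hL hg0),
    setLIntegral_congr_fun measurableSet_Ioi fun s hs =>
      addHaar_setOf_lt_gauge_rpow_neg μ hK hK₀ hKfin hp hd (ht.trans hs),
    lintegral_mul_const' _ _ hKfin, lintegral_Ioi_rpow_neg_div hp hpd ht,
    ← ofReal_measureReal hKfin, ← ENNReal.ofReal_mul hC, ← ENNReal.ofReal_mul htail,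
    mul_comm _ (μ.real K),
    ← ENNReal.ofReal_add (mul_nonneg hC ht.le) (mul_nonneg measureReal_nonneg htail)] at hbound
  rw [integral_eq_lintegral_of_nonneg_ae (ae_restrict_of_forall_mem hL fun x hx =>
      mul_nonneg (hf0 x) (hg0 x hx)) (hfm.aestronglyMeasurable.mul hg.aestronglyMeasurable)]
  exact ENNReal.toReal_le_of_le_ofReal (by positivity) hbound

end GaugeIntegrals

theorem rpow_div_le_of_forall_le {d p A C V : ℝ} (hp : 0 < p) (hpd : p < d) (hA : 0 ≤ A)
    (hC : 0 ≤ C) (hV : 0 < V)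
    (hle : ∀ t > 0, A ≤ C * t + V * (t ^ (1 - d / p) * (p / (d - p)))) :
    (A / (d / (d - p) * V)) ^ (1 / (d - p)) ≤ (C / V) ^ (1 / d) := by
  have hdp : 0 < d - p := sub_pos.2 hpd
  have hd : 0 < d := hp.trans hpd
  rcases hC.eq_or_lt with rfl | hC
  · have hlim : Tendsto (fun t : ℝ => 0 * t + V * (t ^ (1 - d / p) * (p / (d - p)))) atTop
        (𝓝 0) := by
      have h := ((tendsto_rpow_neg_atTop (y := d / p - 1)
        (by rw [sub_pos, one_lt_div hp]; exact hpd)).mul_const (p / (d - p))).const_mul V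
      simpa using h
    have hA0 : A = 0 := le_antisymm (ge_of_tendsto hlim
      ((eventually_gt_atTop 0).mono hle)) hA
    rw [hA0, zero_div, zero_div, Real.zero_rpow (by positivity), Real.zero_rpow (by positivity)]
  · set r := C / V
    have hr : 0 < r := div_pos hC hV
    -- the optimal cut `t = r ^ (-(p / d))` turns both terms into multiples of `V * r ^ (1 - p / d)`
    have hCt : C * r ^ (-(p / d)) = V * r ^ (1 - p / d) := by
      rw [sub_eq_add_neg, Real.rpow_add hr, Real.rpow_one]
      simp only [r]
      field_simp
    have ht : (r ^ (-(p / d))) ^ (1 - d / p) = r ^ (1 - p / d) := by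
      rw [← Real.rpow_mul hr.le]
      congr 1
      field_simp
      ring
    have hAr : A / (d / (d - p) * V) ≤ r ^ ((d - p) / d) := by
      have h := hle _ (Real.rpow_pos_of_pos hr (-(p / d)))
      rw [hCt, ht] at h
      rw [div_le_iff₀ (by positivity), show (d - p) / d = 1 - p / d by field_simp]
      calc A ≤ V * r ^ (1 - p / d) + V * (r ^ (1 - p / d) * (p / (d - p))) := h
        _ = r ^ (1 - p / d) * (d / (d - p) * V) := by field_simp; ring
    calc (A / (d / (d - p) * V)) ^ (1 / (d - p)) ≤ (r ^ ((d - p) / d)) ^ (1 / (d - p)) :=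
          Real.rpow_le_rpow (by positivity) hAr (by positivity)
      _ = r ^ (1 / d) := by
          rw [← Real.rpow_mul hr.le]
          congr 1
          field_simp

theorem IsStarBody.starConvex {n : ℕ} {K : Set (En n)} (hK : IsStarBody K) : StarConvex ℝ 0 K :=
  starConvex_zero_iff.2 fun x hx _ ha₀ ha₁ => hK.2.2.1 x hx _ ⟨ha₀, ha₁⟩

theorem milman_pajor_general (n k : ℕ) (hk : 0 < k) (hkn : k < n)
    (D L : Set (En n)) (hD : IsStarBody D) (hL : IsStarBody L)
    (g : En n → ℝ) (hgc : ContinuousOn g L) (hg0 : ∀ x ∈ L, 0 ≤ g x)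
    (hgsup : ∀ x ∈ L, g x ≤ 1) :
    ((∫ x in L, (gauge D x) ^ (-(k:ℝ)) * g x) / ∫ x in D, (gauge D x) ^ (-(k:ℝ)))
        ^ ((1:ℝ) / ((n:ℝ) - k))
      ≤ ((∫ x in L, g x) / (volume D).toReal) ^ ((1:ℝ) / (n:ℝ)) := by
  have hk' : (0 : ℝ) < k := Nat.cast_pos.2 hk
  have hkn' : (k : ℝ) < finrank ℝ (En n) := by rw [finrank_euclideanSpace_fin]; exact_mod_cast hkn
  have hLm : MeasurableSet L := hL.1.isClosed.measurableSet
  have hDfin : volume D ≠ ∞ := hD.1.measure_lt_top.ne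
  have hDm : Measurable (gauge D) := hD.2.2.2.measurable
  have hV : 0 < volume.real D :=
    ENNReal.toReal_pos (Measure.measure_pos_of_mem_nhds _ hD.2.1).ne' hDfin
  have hintD := setIntegral_gauge_rpow_neg volume hD.starConvex hD.2.1 hDfin hDm hk' hkn'
  have hintL (t : ℝ) (ht : 0 < t) := setIntegral_gauge_rpow_neg_mul_le volume hD.starConvex hD.2.1
    hDfin hDm hk' hkn' hLm (hgc.integrableOn_compact hL.1) hg0 hgsup ht
  rw [finrank_euclideanSpace_fin] at hkn' hintD hintL
  rw [hintD, ← measureReal_def]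
  exact rpow_div_le_of_forall_le hk' hkn' (setIntegral_nonneg hLm fun x hx =>
    mul_nonneg (Real.rpow_nonneg (gauge_nonneg x) _) (hg0 x hx)) (setIntegral_nonneg hLm hg0) hV
    fun t ht => (hintL t ht).trans_eq (by ring)

/-- The Milman–Pajor lemma: if D, L are star bodies, 0 < k < n, and g is a
non-negative continuous function on L with g(0) = ‖g‖_∞ = 1, then
(∫_L ‖x‖_D^{-k} g / ∫_D ‖x‖_D^{-k})^{1/(n-k)} ≤ (∫_L g / |D|)^{1/n}. -/
theorem milman_pajor (n k : ℕ) (hk : 0 < k) (hkn : k < n)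
    (D L : Set (En n)) (hD : IsStarBody D) (hL : IsStarBody L)
    (g : En n → ℝ) (hgc : ContinuousOn g L) (hg0 : ∀ x ∈ L, 0 ≤ g x)
    (hgsup : ∀ x ∈ L, g x ≤ 1) (hgzero : g 0 = 1) :
    ((∫ x in L, (gauge D x) ^ (-(k:ℝ)) * g x) / ∫ x in D, (gauge D x) ^ (-(k:ℝ)))
        ^ ((1:ℝ) / ((n:ℝ) - k))
      ≤ ((∫ x in L, g x) / (volume D).toReal) ^ ((1:ℝ) / (n:ℝ)) :=
  milman_pajor_general n k hk hkn D L hD hL g hgc hg0 hgsup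
end
end

section
/- For every 1 ≤ k ≤ n-1, the constant γ_{n,k} = ω_n^{(n-k)/n} / ω_{n-k} satisfies e^{-k/2} < γ_{n,k} < 1, where ω_m is the volume of the m-dimensional unit Euclidean ball. -/
open MeasureTheory Metric

noncomputable section

/-- Volume of the unit Euclidean ball in ℝ^m. -/
def omeg (m : ℕ) : ℝ := (volume (closedBall (0 : En m) 1)).toReal

/-- The constant γ_{n,k} = ω_n^{(n-k)/n} / ω_{n-k}. -/
def gammaNK (n k : ℕ) : ℝ := omeg n ^ (((n:ℝ) - k)/(n:ℝ)) / omeg (n - k)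

/-! With `g x = log Γ(x + 1)` and `ω_m = π^{m/2} / Γ(m/2 + 1)` one has
`log γ_{n,k} = g x - (x / y) g y` for `x = (n - k)/2`, `y = n/2`. Everything follows from the
convexity of `g` (Bohr–Mollerup), by comparing secant slopes of `g` with its unit-step slopes
`g (t + 1) - g t = log (t + 1)`. The upper bound is `g x / x < g y / y`. The lower bound combines
`g y - g x ≤ (y - x) log (y + 1/2)` with the Stirling-type minorant `g x ≥ x log x - x + 1/2`
at half-integers, which follows by induction from `x = 1/2` and `x = 1`. -/

open Real Set

theorem ConvexOn.slope_le_slope {𝕜 : Type*} [Field 𝕜] [LinearOrder 𝕜] [IsStrictOrderedRing 𝕜]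
    {s : Set 𝕜} {f : 𝕜 → 𝕜} (hf : ConvexOn 𝕜 s f) {a b c d : 𝕜} (ha : a ∈ s) (hb : b ∈ s)
    (hc : c ∈ s) (hd : d ∈ s) (hab : a < b) (hcd : c < d) (hac : a ≤ c) (hbd : b ≤ d) :
    slope f a b ≤ slope f c d :=
  calc slope f a b ≤ slope f a d :=
        hf.slope_mono ha ⟨hb, hab.ne'⟩ ⟨hd, (hab.trans_le hbd).ne'⟩ hbd
    _ = slope f d a := slope_comm f a d
    _ ≤ slope f d c := hf.slope_mono hd ⟨ha, (hab.trans_le hbd).ne⟩ ⟨hc, hcd.ne⟩ hac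
    _ = slope f c d := slope_comm f d c

def logGammaSucc (x : ℝ) : ℝ := log (Gamma (x + 1))

theorem convexOn_logGammaSucc : ConvexOn ℝ (Ioi (-1)) logGammaSucc := by
  have h := convexOn_log_Gamma.translate_left (1 : ℝ)
  have hs : (fun z : ℝ => 1 + z) ⁻¹' Ioi 0 = Ioi (-1) := by
    ext z; simp only [mem_preimage, mem_Ioi]; constructor <;> intro <;> linarith
  rwa [hs] at h

theorem logGammaSucc_zero : logGammaSucc 0 = 0 := by simp [logGammaSucc]

theorem logGammaSucc_add_one {x : ℝ} (hx : -1 < x) :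
    logGammaSucc (x + 1) = logGammaSucc x + log (x + 1) := by
  have hx1 : 0 < x + 1 := by linarith
  rw [logGammaSucc, logGammaSucc, Gamma_add_one hx1.ne',
    log_mul hx1.ne' (Gamma_pos_of_pos hx1).ne', add_comm]

theorem slope_logGammaSucc_add_one {x : ℝ} (hx : -1 < x) :
    slope logGammaSucc x (x + 1) = log (x + 1) := by
  rw [slope_def_field, logGammaSucc_add_one hx, add_sub_cancel_left, add_sub_cancel_left, div_one]

theorem slope_logGammaSucc_le_log {a b c : ℝ} (ha : -1 < a) (hab : a < b) (hac : a ≤ c)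
    (hbc : b ≤ c + 1) : slope logGammaSucc a b ≤ log (c + 1) := by
  have hc : -1 < c := ha.trans_le hac
  have h := convexOn_logGammaSucc.slope_le_slope ha (ha.trans hab) hc
    (by simp only [mem_Ioi]; linarith) hab (lt_add_one c) hac hbc
  rwa [slope_logGammaSucc_add_one hc] at h

theorem log_le_slope_logGammaSucc {a c d : ℝ} (ha : -1 < a) (hcd : c < d) (hac : a ≤ c)
    (had : a + 1 ≤ d) : log (a + 1) ≤ slope logGammaSucc c d := by
  have hc : -1 < c := ha.trans_le hac
  have h := convexOn_logGammaSucc.slope_le_slope ha (by simp only [mem_Ioi]; linarith) hc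
    (hc.trans hcd) (lt_add_one a) hcd hac had
  rwa [slope_logGammaSucc_add_one ha] at h

def stirlingMinorant (x : ℝ) : ℝ := x * log x - x + 1 / 2

theorem stirlingMinorant_le_logGammaSucc_add_one {x : ℝ} (hx : 0 < x)
    (h : stirlingMinorant x ≤ logGammaSucc x) :
    stirlingMinorant (x + 1) ≤ logGammaSucc (x + 1) := by
  have hmul : x * (log (x + 1) - log x) ≤ 1 :=
    calc x * (log (x + 1) - log x) = x * log ((x + 1) / x) := by
          rw [log_div (by positivity) hx.ne']
      _ ≤ x * ((x + 1) / x - 1) := by gcongr; exact log_le_sub_one_of_pos (by positivity)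
      _ = 1 := by field_simp; ring
  rw [logGammaSucc_add_one (by linarith)]
  unfold stirlingMinorant at *
  linarith

theorem logGammaSucc_one_half : logGammaSucc (1 / 2) = log (√π / 2) := by
  rw [logGammaSucc, Gamma_add_one (by norm_num), Gamma_one_half_eq, one_div_mul_eq_div]

theorem stirlingMinorant_one_half_le : stirlingMinorant (1 / 2) ≤ logGammaSucc (1 / 2) := by
  have h2π : log 2 ≤ log π := log_le_log two_pos (by linarith [pi_gt_three])
  rw [stirlingMinorant, logGammaSucc_one_half, log_div (x := √π) (by positivity) two_ne_zero,
    log_sqrt pi_pos.le, one_div, log_inv]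
  linarith

theorem stirlingMinorant_half_nat_le (m : ℕ) (hm : 1 ≤ m) :
    stirlingMinorant (m / 2) ≤ logGammaSucc (m / 2) := by
  suffices ∀ j : ℕ, stirlingMinorant ((j + 1 : ℕ) / 2) ≤ logGammaSucc ((j + 1 : ℕ) / 2) ∧
      stirlingMinorant ((j + 2 : ℕ) / 2) ≤ logGammaSucc ((j + 2 : ℕ) / 2) by
    obtain ⟨j, rfl⟩ := Nat.exists_eq_add_of_le' hm
    exact (this j).1
  intro j
  induction j with
  | zero =>
    exact ⟨by simpa using stirlingMinorant_one_half_le,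
      by norm_num [stirlingMinorant, logGammaSucc]⟩
  | succ j ih =>
    refine ⟨ih.2, ?_⟩
    have h := stirlingMinorant_le_logGammaSucc_add_one (by positivity) ih.1
    have e : ((j + 1 + 2 : ℕ) : ℝ) / 2 = ((j + 1 : ℕ) : ℝ) / 2 + 1 := by push_cast; ring
    rwa [e]

theorem mul_logGammaSucc_sub_lt {x y : ℝ} (hx : 0 < x) (hxy : x + 1 / 2 ≤ y)
    (hgx : stirlingMinorant x ≤ logGammaSucc x) :
    x * logGammaSucc y - y * logGammaSucc x < y * (y - x) := by
  have hy : 0 < y := by linarith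
  have hyx : 0 < y - x := by linarith
  have hslope : logGammaSucc y - logGammaSucc x ≤ (y - x) * log (y + 1 / 2) := by
    have h := slope_logGammaSucc_le_log (a := x) (b := y) (c := y - 1 / 2) (by linarith)
      (by linarith) (by linarith) (by linarith)
    rwa [slope_def_field, show y - 1 / 2 + 1 = y + 1 / 2 by ring, div_le_iff₀ hyx,
      mul_comm] at h
  have hratio : log ((y + 1 / 2) / x) < (y + 1 / 2) / x - 1 :=
    log_lt_sub_one_of_pos (by positivity) (by rw [ne_eq, div_eq_one_iff_eq hx.ne']; linarith)
  calc x * logGammaSucc y - y * logGammaSucc x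
        = x * (logGammaSucc y - logGammaSucc x) - (y - x) * logGammaSucc x := by ring
    _ ≤ x * ((y - x) * log (y + 1 / 2)) - (y - x) * stirlingMinorant x := by gcongr
    _ = (y - x) * (x * log ((y + 1 / 2) / x) + x - 1 / 2) := by
        rw [stirlingMinorant, log_div (by positivity) hx.ne']; ring
    _ < (y - x) * (x * ((y + 1 / 2) / x - 1) + x - 1 / 2) := by gcongr
    _ = y * (y - x) := by field_simp; ring

theorem logGammaSucc_div_lt_of_one_le {x y : ℝ} (hx : 1 ≤ x) (hxy : x + 1 / 2 ≤ y) :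
    logGammaSucc x / x < logGammaSucc y / y := by
  have hx0 : 0 < x := by linarith
  have hyx : 0 < y - x := by linarith
  have h0 : logGammaSucc x / x ≤ log x := by
    have h := slope_logGammaSucc_le_log (a := 0) (c := x - 1) (by norm_num) hx0 (by linarith)
      (by linarith)
    rwa [slope_def_field, logGammaSucc_zero, sub_zero, sub_zero, sub_add_cancel] at h
  have h1 : log (x + 1 / 2) ≤ (logGammaSucc y - logGammaSucc x) / (y - x) := by
    have h := log_le_slope_logGammaSucc (a := x - 1 / 2) (c := x) (d := y) (by linarith)
      (by linarith) (by linarith) (by linarith)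
    rwa [slope_def_field, show x - 1 / 2 + 1 = x + 1 / 2 by ring] at h
  have h := h0.trans_lt ((log_lt_log hx0 (by linarith)).trans_le h1)
  rw [div_lt_div_iff₀ hx0 hyx] at h
  rw [div_lt_div_iff₀ hx0 (by linarith)]
  linarith

theorem logGammaSucc_one_half_neg : logGammaSucc (1 / 2) < 0 := by
  rw [logGammaSucc_one_half]
  refine log_neg (by positivity) ?_
  have : √π < 2 := by
    rw [sqrt_lt' two_pos]; linarith [pi_lt_four]
  linarith

theorem logGammaSucc_nonneg {y : ℝ} (hy : 1 ≤ y) : 0 ≤ logGammaSucc y := by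
  refine log_nonneg ?_
  have h := Gamma_strictMonoOn_Ici.monotoneOn (a := 2) (b := y + 1) self_mem_Ici
    (by simp only [mem_Ici]; linarith) (by linarith)
  rwa [Gamma_two] at h

theorem logGammaSucc_half_nat_div_lt (m : ℕ) (hm : 1 ≤ m) {y : ℝ}
    (hy : (m : ℝ) / 2 + 1 / 2 ≤ y) :
    logGammaSucc (m / 2) / (m / 2) < logGammaSucc y / y := by
  rcases hm.eq_or_lt with rfl | hm2
  · rw [Nat.cast_one] at hy ⊢
    exact (div_neg_of_neg_of_pos logGammaSucc_one_half_neg one_half_pos).trans_le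
      (div_nonneg (logGammaSucc_nonneg (by linarith)) (by linarith))
  · exact logGammaSucc_div_lt_of_one_le (by rw [le_div_iff₀ two_pos]; exact_mod_cast hm2) hy

theorem omeg_eq_exp {m : ℕ} (hm : 0 < m) :
    omeg m = exp (m / 2 * log π - logGammaSucc (m / 2)) := by
  have : Nonempty (Fin m) := ⟨⟨0, hm⟩⟩
  rw [omeg, EuclideanSpace.volume_closedBall, Fintype.card_fin, ENNReal.ofReal_one, one_pow,
    one_mul, ENNReal.toReal_ofReal (by positivity), exp_sub, logGammaSucc,
    exp_log (Gamma_pos_of_pos (by positivity)), sqrt_eq_rpow, ← rpow_mul_natCast pi_pos.le,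
    rpow_def_of_pos pi_pos]
  ring_nf

theorem gammaNK_add_eq_exp {m : ℕ} (k : ℕ) (hm : 0 < m) :
    gammaNK (m + k) k =
      exp (logGammaSucc (m / 2) - m / (m + k) * logGammaSucc ((m + k) / 2)) := by
  rw [gammaNK, Nat.add_sub_cancel, omeg_eq_exp hm, omeg_eq_exp (by omega), ← exp_mul, ← exp_sub]
  congr 1
  push_cast
  field_simp
  ring

/-- For 1 ≤ k ≤ n-1, the constant γ_{n,k} = ω_n^{(n-k)/n}/ω_{n-k} satisfies
e^{-k/2} < γ_{n,k} < 1. -/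
theorem gammaNK_bounds (n k : ℕ) (hk : 1 ≤ k) (hkn : k ≤ n - 1) :
    Real.exp (-(k:ℝ)/2) < gammaNK n k ∧ gammaNK n k < 1 := by
  obtain ⟨m, rfl⟩ : ∃ m, n = m + k := ⟨n - k, by omega⟩
  have hm : 1 ≤ m := by omega
  have hk1 : (1 : ℝ) ≤ k := by exact_mod_cast hk
  have hm1 : (1 : ℝ) ≤ m := by exact_mod_cast hm
  set x : ℝ := m / 2 with hx
  set y : ℝ := (m + k) / 2 with hy
  have hxy : x + 1 / 2 ≤ y := by linarith
  have hy0 : 0 < y := by linarith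
  have hexponent : logGammaSucc x - m / (m + k) * logGammaSucc y =
      (y * logGammaSucc x - x * logGammaSucc y) / y := by
    rw [hx, hy]; field_simp
  rw [gammaNK_add_eq_exp k hm, hexponent]
  constructor
  · have h := mul_logGammaSucc_sub_lt (by linarith) hxy (stirlingMinorant_half_nat_le m hm)
    have hyx : y * (y - x) = k / 2 * y := by rw [hx, hy]; ring
    rw [exp_lt_exp, lt_div_iff₀ hy0]
    linarith
  · have h := logGammaSucc_half_nat_div_lt m hm hxy
    rw [← hx, div_lt_div_iff₀ (by linarith) hy0] at h
    rw [exp_lt_one_iff]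
    exact div_neg_of_neg_of_pos (by linarith) hy0
end
end
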